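/- Let 0 ≤ x ≤ y ≤ 1 with x + y ≥ 1 and y > 0, and let Q be the convex hull of the points (0,1), (0,0), (1,0), (x,y). Let Λ be the lattice generated by the vectors ((x-1)/(2y), 1) and (1 - (1-x)/(2y), 1/2). Then the translates {Q + v : v ∈ Λ} have pairwise disjoint interiors, i.e., they form a packing of the plane. -/

import Mathlib

/-!
A nonzero linear functional `f` whose values on a convex set `Q` fill an interval of length `w`
separates `Q` from any translate `Q + d` with `|f d| ≥ w`. Every nonzero vector `a v₁ + b v₂` of
the lattice is separated from the quadrilateral this way by one of three functionals: the second
coordinate when `|2a + b| ≥ 2`, the first coordinate when `a ≠ 0` and `|2a + b| ≤ 1`, and, when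
`a = 0`, the functional `y p₁ + (1 - x) p₂` normal to the edge from `(1,0)` to `(x,y)`, which takes
values in `[0, y]` on the quadrilateral and the value `y` at `v₂`.
-/

open Set

section Separation

variable {M : Type*} [AddCommGroup M] [TopologicalSpace M] [ContinuousAdd M] [Module ℝ M]
  [ContinuousSMul ℝ M]

theorem lt_of_mem_interior_of_forall_le {f : StrongDual ℝ M} (hf : f ≠ 0) {A : Set M} {c : ℝ}
    (hA : ∀ p ∈ A, f p ≤ c) {p : M} (hp : p ∈ interior A) : f p < c := by
  have hsub : f '' interior A ⊆ interior (Iic c) :=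
    interior_maximal (image_subset_iff.2 fun q hq => hA q (interior_subset hq))
      (f.isOpenMap_of_ne_zero hf _ isOpen_interior)
  simpa only [interior_Iic, mem_Iio] using hsub (mem_image_of_mem f hp)

theorem disjoint_interior_of_forall_le_of_forall_ge {f : StrongDual ℝ M} (hf : f ≠ 0)
    {A B : Set M} {c : ℝ} (hA : ∀ p ∈ A, f p ≤ c) (hB : ∀ p ∈ B, c ≤ f p) :
    Disjoint (interior A) (interior B) := by
  refine Set.disjoint_left.2 fun p hpA hpB => ?_
  have hlt : f p < c := lt_of_mem_interior_of_forall_le hf hA hpA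
  have hgt : -f p < -c :=
    lt_of_mem_interior_of_forall_le (neg_ne_zero.2 hf) (fun q hq => neg_le_neg (hB q hq)) hpB
  linarith

theorem disjoint_interior_translate_convexHull_of_width_le {f : StrongDual ℝ M} (hf : f ≠ 0)
    {S : Set M} {lo hi : ℝ} (hS : ∀ p ∈ S, f p ∈ Icc lo hi) {t₁ t₂ : M}
    (hwidth : hi - lo ≤ |f (t₂ - t₁)|) :
    Disjoint (interior ((fun p => p + t₁) '' convexHull ℝ S))
      (interior ((fun p => p + t₂) '' convexHull ℝ S)) := by
  have hull : ∀ p ∈ convexHull ℝ S, f p ∈ Icc lo hi :=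
    fun p hp => convexHull_min hS ((convex_Icc lo hi).linear_preimage f.toLinearMap) hp
  have key : ∀ t₁ t₂ : M, hi - lo ≤ f (t₂ - t₁) →
      Disjoint (interior ((fun p => p + t₁) '' convexHull ℝ S))
        (interior ((fun p => p + t₂) '' convexHull ℝ S)) := by
    intro t₁ t₂ h
    rw [map_sub] at h
    refine disjoint_interior_of_forall_le_of_forall_ge hf (c := hi + f t₁) ?_ ?_
    · rintro _ ⟨p, hp, rfl⟩
      simp only [map_add]
      linarith [(hull p hp).2]
    · rintro _ ⟨p, hp, rfl⟩
      simp only [map_add]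
      linarith [(hull p hp).1]
  rcases le_total 0 (f (t₂ - t₁)) with hpos | hneg
  · exact key t₁ t₂ (hwidth.trans_eq (abs_of_nonneg hpos))
  · refine (key t₂ t₁ ?_).symm
    rwa [abs_of_nonpos hneg, ← map_neg, neg_sub] at hwidth

end Separation

noncomputable section

namespace QuadrilateralPacking

variable (x y : ℝ)

def vertices : Set (ℝ × ℝ) := {(0, 1), (0, 0), (1, 0), (x, y)}

def v₁ : ℝ × ℝ := ((x - 1) / (2 * y), 1)

def v₂ : ℝ × ℝ := (1 - (1 - x) / (2 * y), 1 / 2)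

def edgeNormal : StrongDual ℝ (ℝ × ℝ) :=
  y • ContinuousLinearMap.fst ℝ ℝ ℝ + (1 - x) • ContinuousLinearMap.snd ℝ ℝ ℝ

theorem edgeNormal_apply (p : ℝ × ℝ) : edgeNormal x y p = y * p.1 + (1 - x) * p.2 := rfl

variable {x y}

theorem edgeNormal_ne_zero (hy : y ≠ 0) : edgeNormal x y ≠ 0 := fun h => by
  simpa [edgeNormal_apply, hy] using congrArg (fun f : StrongDual ℝ (ℝ × ℝ) => f (1, 0)) h

theorem edgeNormal_v₂ (hy : y ≠ 0) : edgeNormal x y (v₂ x y) = y := by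
  simp only [edgeNormal_apply, v₂]
  field_simp
  ring

theorem fst_mem_Icc_of_mem_vertices (hx0 : 0 ≤ x) (hx1 : x ≤ 1) :
    ∀ p ∈ vertices x y, p.1 ∈ Icc (0 : ℝ) 1 := by
  rintro p (rfl | rfl | rfl | rfl) <;> norm_num [hx0, hx1]

theorem snd_mem_Icc_of_mem_vertices (hy0 : 0 ≤ y) (hy1 : y ≤ 1) :
    ∀ p ∈ vertices x y, p.2 ∈ Icc (0 : ℝ) 1 := by
  rintro p (rfl | rfl | rfl | rfl) <;> norm_num [hy0, hy1]

theorem edgeNormal_mem_Icc_of_mem_vertices (hx1 : x ≤ 1) (hy0 : 0 ≤ y) (hsum : 1 ≤ x + y) :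
    ∀ p ∈ vertices x y, edgeNormal x y p ∈ Icc 0 y := by
  rintro p (rfl | rfl | rfl | rfl) <;> simp only [edgeNormal_apply, mem_Icc] <;> constructor <;>
    linarith

theorem lattice_fst (a b : ℤ) :
    (a • v₁ x y + b • v₂ x y).1 = b - (a + b) * ((1 - x) / (2 * y)) := by
  rw [Prod.fst_add, Prod.smul_fst, Prod.smul_fst]
  simp only [v₁, v₂, zsmul_eq_mul]
  ring

theorem lattice_snd (a b : ℤ) : (a • v₁ x y + b • v₂ x y).2 = a + b / 2 := by
  rw [Prod.snd_add, Prod.smul_snd, Prod.smul_snd]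
  simp only [v₁, v₂, zsmul_eq_mul]
  ring

theorem one_le_abs_lattice_fst (hx1 : x ≤ 1) (hsum : 1 ≤ x + y) (hy0 : 0 < y) {a b : ℤ}
    (ha : a ≠ 0) (hn : |2 * a + b| ≤ 1) : 1 ≤ |(a • v₁ x y + b • v₂ x y).1| := by
  set W := (1 - x) / (2 * y)
  have hW0 : 0 ≤ W := div_nonneg (by linarith) (by positivity)
  have hW1 : W ≤ 1 / 2 := by
    rw [div_le_iff₀ (by positivity)]
    linarith
  have hn' : |(2 * a + b : ℝ)| ≤ 1 := by exact_mod_cast hn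
  rw [abs_le] at hn'
  rw [lattice_fst]
  -- with `n = 2a + b`, the first coordinate is `n (1 - W) - a (2 - W)`
  rcases lt_or_gt_of_ne ha with hneg | hpos
  · have ha' : (a : ℝ) ≤ -1 := by exact_mod_cast Int.le_sub_one_of_lt hneg
    refine le_abs.2 (Or.inl ?_)
    nlinarith [mul_nonneg (by linarith : (0 : ℝ) ≤ -1 - a) (by linarith : (0 : ℝ) ≤ 2 - W)]
  · have ha' : (1 : ℝ) ≤ a := by exact_mod_cast hpos
    refine le_abs.2 (Or.inr ?_)
    nlinarith [mul_nonneg (by linarith : (0 : ℝ) ≤ a - 1) (by linarith : (0 : ℝ) ≤ 2 - W)]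

theorem exists_width_le_abs_lattice (hx0 : 0 ≤ x) (hx1 : x ≤ 1) (hy1 : y ≤ 1)
    (hsum : 1 ≤ x + y) (hy0 : 0 < y) {a b : ℤ} (hab : a ≠ 0 ∨ b ≠ 0) :
    ∃ f : StrongDual ℝ (ℝ × ℝ), f ≠ 0 ∧ ∃ lo hi : ℝ,
      (∀ p ∈ vertices x y, f p ∈ Icc lo hi) ∧ hi - lo ≤ |f (a • v₁ x y + b • v₂ x y)| := by
  by_cases ha : a = 0
  · subst ha
    have hb : (1 : ℝ) ≤ |(b : ℝ)| := by
      exact_mod_cast Int.one_le_abs (hab.resolve_left (not_not.2 rfl))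
    refine ⟨edgeNormal x y, edgeNormal_ne_zero hy0.ne', 0, y,
      edgeNormal_mem_Icc_of_mem_vertices hx1 hy0.le hsum, ?_⟩
    rw [zero_smul, zero_add, map_zsmul, edgeNormal_v₂ hy0.ne', zsmul_eq_mul, abs_mul,
      abs_of_pos hy0, sub_zero]
    exact le_mul_of_one_le_left hy0.le hb
  rcases le_or_gt 2 |2 * a + b| with hn | hn
  · refine ⟨ContinuousLinearMap.snd ℝ ℝ ℝ, fun h => by simpa using congrArg (· (0, 1)) h, 0, 1,
      snd_mem_Icc_of_mem_vertices hy0.le hy1, ?_⟩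
    have hn' : (2 : ℝ) ≤ |(2 * a + b : ℝ)| := by exact_mod_cast hn
    rw [ContinuousLinearMap.coe_snd', lattice_snd,
      show (a + b / 2 : ℝ) = (2 * a + b) / 2 by ring, abs_div, abs_two]
    linarith
  · refine ⟨ContinuousLinearMap.fst ℝ ℝ ℝ, fun h => by simpa using congrArg (· (1, 0)) h, 0, 1,
      fst_mem_Icc_of_mem_vertices hx0 hx1, ?_⟩
    rw [sub_zero]
    exact one_le_abs_lattice_fst hx1 hsum hy0 ha (Int.lt_add_one_iff.1 hn)

end QuadrilateralPacking

end

theorem stmt_17 (x y : ℝ) (hx0 : 0 ≤ x) (hxy : x ≤ y) (hy1 : y ≤ 1) (hsum : 1 ≤ x + y)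
    (hy0 : 0 < y) :
    let Q : Set (ℝ × ℝ) := convexHull ℝ {(0,1), (0,0), (1,0), (x,y)}
    let v₁ : ℝ × ℝ := ((x-1)/(2*y), 1)
    let v₂ : ℝ × ℝ := (1 - (1-x)/(2*y), 1/2)
    ∀ k₁ k₂ m₁ m₂ : ℤ, (k₁, k₂) ≠ (m₁, m₂) →
      Disjoint (interior ((fun p => p + (k₁ • v₁ + k₂ • v₂)) '' Q))
               (interior ((fun p => p + (m₁ • v₁ + m₂ • v₂)) '' Q)) := by
  intro Q v₁ v₂ k₁ k₂ m₁ m₂ hne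
  have hdiff : m₁ - k₁ ≠ 0 ∨ m₂ - k₂ ≠ 0 := by
    simp only [ne_eq, Prod.mk.injEq] at hne
    omega
  obtain ⟨f, hf, lo, hi, hS, hwidth⟩ :=
    QuadrilateralPacking.exists_width_le_abs_lattice hx0 (hxy.trans hy1) hy1 hsum hy0 hdiff
  have hsub : (m₁ • v₁ + m₂ • v₂) - (k₁ • v₁ + k₂ • v₂) = (m₁ - k₁) • v₁ + (m₂ - k₂) • v₂ := by
    simp only [sub_smul]
    abel
  refine disjoint_interior_translate_convexHull_of_width_le hf hS ?_
  rwa [hsub]
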